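/- For 0 < p < q < 1, the quantity s(p,q) = (Φ⁻¹(p)φ(Φ⁻¹(p)) − Φ⁻¹(q)φ(Φ⁻¹(q)))/(q−p) − (φ(Φ⁻¹(p)) − φ(Φ⁻¹(q)))²/(q−p)² + 1 is strictly positive. -/

import Mathlib

open MeasureTheory ProbabilityTheory Real Set Matrix

/-- The standard normal distribution on `ℝ`. -/
noncomputable def stdNormal : Measure ℝ := ProbabilityTheory.gaussianReal 0 1

/-- The standard normal CDF `Φ`. -/
noncomputable def Phi (x : ℝ) : ℝ := (stdNormal (Set.Iic x)).toReal

/-- The standard normal PDF `φ`. -/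
noncomputable def stdPDF (x : ℝ) : ℝ := (Real.sqrt (2 * Real.pi))⁻¹ * Real.exp (-x ^ 2 / 2)

/-- Covariance of two real random variables. -/
noncomputable def cov {Ω : Type*} [MeasurableSpace Ω] (μ : Measure Ω) (X Y : Ω → ℝ) : ℝ :=
  ∫ ω, (X ω - ∫ a, X a ∂μ) * (Y ω - ∫ a, Y a ∂μ) ∂μ

/-- `(X, Y)` is a (bivariate) Gaussian vector: every linear combination is Gaussian. -/
def IsGaussianPair {Ω : Type*} [MeasurableSpace Ω] (μ : Measure Ω) (X Y : Ω → ℝ) : Prop :=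
  ∀ s t : ℝ, ∃ m : ℝ, ∃ v : NNReal,
    Measure.map (fun ω => s * X ω + t * Y ω) μ = ProbabilityTheory.gaussianReal m v

/-- `X` is a multivariate Gaussian vector: every linear combination of coordinates is Gaussian. -/
def IsGaussianVec {Ω : Type*} [MeasurableSpace Ω] {d : ℕ} (μ : Measure Ω)
    (X : Ω → Fin d → ℝ) : Prop :=
  ∀ c : Fin d → ℝ, ∃ m : ℝ, ∃ v : NNReal,
    Measure.map (fun ω => ∑ i, c i * X ω i) μ = ProbabilityTheory.gaussianReal m v

lemma gaussianPDFReal_zero_one : gaussianPDFReal 0 1 = stdPDF := by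
  funext x
  simp [gaussianPDFReal, stdPDF, neg_div]

lemma stdPDF_pos (x : ℝ) : 0 < stdPDF x := by
  have h2π : 0 < Real.sqrt (2 * Real.pi) := Real.sqrt_pos.2 (by positivity)
  exact mul_pos (inv_pos.2 h2π) (Real.exp_pos _)

lemma continuous_stdPDF : Continuous stdPDF := by
  unfold stdPDF; fun_prop

lemma hasDerivAt_stdPDF (x : ℝ) : HasDerivAt stdPDF (-(x * stdPDF x)) x := by
  have h1 : HasDerivAt (fun y : ℝ => -y ^ 2 / 2) (-x) x := by
    have := ((hasDerivAt_pow 2 x).neg).div_const 2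
    refine this.congr_deriv ?_
    ring
  have h2 := (h1.exp).const_mul (Real.sqrt (2 * Real.pi))⁻¹
  have : stdPDF = fun y => (Real.sqrt (2 * Real.pi))⁻¹ * Real.exp (-y ^ 2 / 2) := rfl
  rw [this]
  refine h2.congr_deriv ?_
  simp [stdPDF]; ring

lemma Phi_eq_integral (x : ℝ) : Phi x = ∫ t in Iic x, stdPDF t := by
  rw [Phi, stdNormal, gaussianReal_apply_eq_integral 0 one_ne_zero,
    ENNReal.toReal_ofReal (integral_nonneg fun t => gaussianPDFReal_nonneg 0 1 t),
    gaussianPDFReal_zero_one]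

lemma integrableOn_stdPDF (s : Set ℝ) : IntegrableOn stdPDF s := by
  have := integrable_gaussianPDFReal 0 1
  rw [gaussianPDFReal_zero_one] at this
  exact this.integrableOn

lemma Phi_mono : Monotone Phi := by
  intro a b hab
  unfold Phi
  have : stdNormal (Iic a) ≤ stdNormal (Iic b) := measure_mono (Iic_subset_Iic.2 hab)
  have hfin : stdNormal (Iic b) ≠ ⊤ := by
    have : IsProbabilityMeasure stdNormal := by
      unfold stdNormal; infer_instance
    exact (measure_ne_top _ _)
  exact ENNReal.toReal_mono hfin this

theorem stmt_9 (p q : ℝ) (hp : 0 < p) (hpq : p < q) (hq : q < 1)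
    (xp xq : ℝ) (hxp : Phi xp = p) (hxq : Phi xq = q) :
    0 < (xp * stdPDF xp - xq * stdPDF xq) / (q - p)
      - (stdPDF xp - stdPDF xq) ^ 2 / (q - p) ^ 2 + 1 := by
  have f := stdPDF
  -- xp < xq
  have hxpq : xp < xq := by
    by_contra h
    push_neg at h
    have := Phi_mono h
    rw [hxp, hxq] at this
    linarith
  have hcont := continuous_stdPDF
  have hIint : ∀ g : ℝ → ℝ, Continuous g → ∀ a b : ℝ,
      IntervalIntegrable g volume a b := fun g hg a b => hg.intervalIntegrable a b
  -- I0 = q - p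
  set I0 : ℝ := ∫ x in xp..xq, stdPDF x with hI0def
  have hI0 : I0 = q - p := by
    rw [hI0def, ← intervalIntegral.integral_Iic_sub_Iic (integrableOn_stdPDF _)
      (integrableOn_stdPDF _), ← Phi_eq_integral, ← Phi_eq_integral, hxp, hxq]
  have hI0pos : 0 < I0 := by rw [hI0]; linarith
  -- I1 = f xp - f xq
  set I1 : ℝ := ∫ x in xp..xq, x * stdPDF x with hI1def
  have hI1 : I1 = stdPDF xp - stdPDF xq := by
    rw [hI1def]
    have := intervalIntegral.integral_eq_sub_of_hasDerivAt
      (f := fun y => -stdPDF y) (f' := fun y => y * stdPDF y) (a := xp) (b := xq)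
      (fun y _ => by have := (hasDerivAt_stdPDF y).neg; simp only [neg_neg] at this; exact this)
      (hIint _ (by fun_prop) xp xq)
    rw [this]; ring
  -- I2 = I0 + xp f xp - xq f xq
  set I2 : ℝ := ∫ x in xp..xq, x ^ 2 * stdPDF x with hI2def
  have hI2 : I2 = I0 + xp * stdPDF xp - xq * stdPDF xq := by
    have h := intervalIntegral.integral_eq_sub_of_hasDerivAt
      (f := fun y => -(y * stdPDF y)) (f' := fun y => y ^ 2 * stdPDF y - stdPDF y)
      (a := xp) (b := xq)
      (fun y _ => by
        have := ((hasDerivAt_id y).mul (hasDerivAt_stdPDF y)).neg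
        refine this.congr_deriv ?_
        simp [id_eq]; ring)
      (hIint _ (by fun_prop) xp xq)
    have hsub : (∫ x in xp..xq, (x ^ 2 * stdPDF x - stdPDF x)) = I2 - I0 := by
      rw [intervalIntegral.integral_sub (hIint _ (by fun_prop) xp xq)
        (hIint _ hcont xp xq)]
    rw [hsub] at h
    have : I2 - I0 = xp * stdPDF xp - xq * stdPDF xq := by rw [h]; ring
    linarith
  -- mean
  set m : ℝ := I1 / I0 with hmdef
  have hmlt : m < xq := by
    have hpos : 0 < ∫ x in xp..xq, (xq - x) * stdPDF x := by
      apply intervalIntegral.intervalIntegral_pos_of_pos_on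
        (hIint _ (by fun_prop) xp xq) _ hxpq
      intro x hx
      exact mul_pos (by linarith [hx.2]) (stdPDF_pos x)
    have hexp : (∫ x in xp..xq, (xq - x) * stdPDF x) = xq * I0 - I1 := by
      have : ∀ x : ℝ, (xq - x) * stdPDF x = xq * stdPDF x - x * stdPDF x := fun x => by ring
      simp_rw [this]
      rw [intervalIntegral.integral_sub ((hIint _ hcont xp xq).const_mul xq)
        (hIint _ (by fun_prop) xp xq), intervalIntegral.integral_const_mul]
    rw [hexp] at hpos
    rw [hmdef, div_lt_iff₀ hI0pos]
    linarith
  -- variance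
  set V : ℝ := ∫ x in xp..xq, (x - m) ^ 2 * stdPDF x with hVdef
  have hVpos : 0 < V := by
    set a : ℝ := max xp m with hadef
    have haxq : a < xq := max_lt hxpq hmlt
    have hxpa : xp ≤ a := le_max_left _ _
    have hsplit : (∫ x in xp..a, (x - m) ^ 2 * stdPDF x)
        + (∫ x in a..xq, (x - m) ^ 2 * stdPDF x) = V := by
      rw [hVdef]
      exact intervalIntegral.integral_add_adjacent_intervals
        (hIint _ (by fun_prop) xp a) (hIint _ (by fun_prop) a xq)
    have h1 : 0 ≤ ∫ x in xp..a, (x - m) ^ 2 * stdPDF x :=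
      intervalIntegral.integral_nonneg hxpa
        (fun x _ => mul_nonneg (sq_nonneg _) (stdPDF_pos x).le)
    have h2 : 0 < ∫ x in a..xq, (x - m) ^ 2 * stdPDF x := by
      apply intervalIntegral.intervalIntegral_pos_of_pos_on
        (hIint _ (by fun_prop) a xq) _ haxq
      intro x hx
      have hxm : m < x := lt_of_le_of_lt (le_max_right xp m) hx.1
      exact mul_pos (pow_pos (sub_pos.2 hxm) 2) (stdPDF_pos x)
    linarith
  have hVexp : V = I2 - 2 * m * I1 + m ^ 2 * I0 := by
    rw [hVdef]
    have : ∀ x : ℝ, (x - m) ^ 2 * stdPDF x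
        = x ^ 2 * stdPDF x - (2 * m) * (x * stdPDF x) + m ^ 2 * stdPDF x := fun x => by ring
    simp_rw [this]
    rw [intervalIntegral.integral_add (IntervalIntegrable.sub (hIint _ (by fun_prop) xp xq)
        ((hIint _ (by fun_prop) xp xq).const_mul (2 * m)))
        ((hIint _ hcont xp xq).const_mul (m ^ 2)),
      intervalIntegral.integral_sub (hIint _ (by fun_prop) xp xq)
        ((hIint _ (by fun_prop) xp xq).const_mul (2 * m)),
      intervalIntegral.integral_const_mul, intervalIntegral.integral_const_mul]
  -- conclude
  have hI0ne : I0 ≠ 0 := ne_of_gt hI0pos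
  have key : (xp * stdPDF xp - xq * stdPDF xq) / (q - p)
      - (stdPDF xp - stdPDF xq) ^ 2 / (q - p) ^ 2 + 1 = V / I0 := by
    rw [hVexp, ← hI0, ← hI1, hmdef]
    have hIxp : xp * stdPDF xp - xq * stdPDF xq = I2 - I0 := by rw [hI2]; ring
    rw [hIxp]
    field_simp
    ring
  rw [key]
  exact div_pos hVpos hI0pos
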